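/- arXiv:math/0002107 — 3 statements merged into one kernel-verified Lean document; each statement's English description precedes it below -/
import Mathlib

section
/- For the free group on k generators, the Witt numbers phi_n = (1/n) * sum over divisors d of n of mu(d) * k^(n/d) satisfy the product identity prod over n >= 1 of (1 - t^n)^(phi_n) = 1 - k*t as formal power series over the rationals. -/
open PowerSeries ArithmeticFunction

noncomputable def wittG (n : ℕ) : PowerSeries ℚ :=
  PowerSeries.mk fun m => if n ∣ m then 1 else 0

lemma wittG_mul (n : ℕ) (hn : 1 ≤ n) : (1 - X ^ n : PowerSeries ℚ) * wittG n = 1 := by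
  ext m
  rw [sub_mul, one_mul, map_sub, coeff_X_pow_mul', coeff_one, wittG, coeff_mk]
  rcases Nat.eq_zero_or_pos m with rfl | hm
  · have : ¬ n ≤ 0 := by omega
    simp [this]
  · have : n ∣ m ↔ (n ≤ m ∧ n ∣ m - n) := by
      constructor
      · intro h; exact ⟨Nat.le_of_dvd hm h, (Nat.dvd_sub h dvd_rfl)⟩
      · rintro ⟨h1, h2⟩
        have := Nat.dvd_add h2 (dvd_refl n)
        rwa [Nat.sub_add_cancel h1] at this
    rw [coeff_mk]
    split_ifs with h1 h2 h2 <;> simp_all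

noncomputable def wittGk (k : ℚ) : PowerSeries ℚ := PowerSeries.mk fun m => k ^ m

lemma wittGk_mul (k : ℚ) : (1 - C (R := ℚ) k * X) * wittGk k = 1 := by
  ext m
  rw [sub_mul, one_mul, map_sub, mul_assoc, coeff_C_mul, coeff_one]
  rcases m with _ | m
  · simp [wittGk]
  · rw [coeff_succ_X_mul]
    simp [wittGk, coeff_mk, pow_succ, mul_comm]

lemma witt_deriv_pow (n c : ℕ) (hn : 1 ≤ n) :
    d⁄dX ℚ ((1 - X ^ n) ^ c : PowerSeries ℚ) =
      (1 - X ^ n) ^ c * (((c : ℕ) : PowerSeries ℚ) * d⁄dX ℚ (1 - X ^ n) * wittG n) := by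
  rcases c with _ | c
  · simp
  · rw [Derivation.leibniz_pow]
    simp only [smul_eq_mul, nsmul_eq_mul, Nat.add_sub_cancel]
    have h := wittG_mul n hn
    have key : (1 - X ^ n : PowerSeries ℚ) ^ (c + 1) *
          ((((c + 1 : ℕ)) : PowerSeries ℚ) * d⁄dX ℚ (1 - X ^ n) * wittG n)
        = (((c + 1 : ℕ)) : PowerSeries ℚ) * ((1 - X ^ n) ^ c * d⁄dX ℚ (1 - X ^ n)) *
            ((1 - X ^ n) * wittG n) := by
      ring
    rw [key, h, mul_one]

lemma witt_deriv_prod (φ : ℕ → ℕ) (s : Finset ℕ) (hs : ∀ n ∈ s, 1 ≤ n) :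
    d⁄dX ℚ (∏ n ∈ s, ((1 - X ^ n) ^ (φ n) : PowerSeries ℚ)) =
      (∏ n ∈ s, ((1 - X ^ n) ^ (φ n) : PowerSeries ℚ)) *
        ∑ n ∈ s, ((φ n : ℕ) : PowerSeries ℚ) * d⁄dX ℚ (1 - X ^ n) * wittG n := by
  induction s using Finset.induction with
  | empty => simp
  | @insert a s' ha ih =>
    rw [Finset.prod_insert ha, Finset.sum_insert ha, Derivation.leibniz,
      witt_deriv_pow a (φ a) (hs a (Finset.mem_insert_self a s')),
      ih (fun n hn => hs n (Finset.mem_insert_of_mem hn))]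
    simp only [smul_eq_mul]
    ring

lemma witt_deriv_one_sub (n : ℕ) :
    d⁄dX ℚ (1 - X ^ n : PowerSeries ℚ) = -((n : PowerSeries ℚ) * X ^ (n - 1)) := by
  rw [map_sub, Derivation.leibniz_pow]
  simp [smul_eq_mul]

lemma witt_coeff_term (n : ℕ) (hn : 1 ≤ n) (c : ℕ) (m : ℕ) :
    coeff (R := ℚ) m (((c : ℕ) : PowerSeries ℚ) * d⁄dX ℚ (1 - X ^ n) * wittG n)
      = if n ∣ (m + 1) then -((c : ℚ) * n) else 0 := by
  rw [witt_deriv_one_sub n]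
  have key : ((c : ℕ) : PowerSeries ℚ) * -((n : PowerSeries ℚ) * X ^ (n - 1)) * wittG n
      = -(C (R := ℚ) (((c * n : ℕ) : ℚ)) * (X ^ (n - 1) * wittG n)) := by
    rw [map_natCast (C (R := ℚ)) (c * n)]
    push_cast
    ring
  rw [key, map_neg, coeff_C_mul, coeff_X_pow_mul', wittG]
  by_cases h1 : n - 1 ≤ m
  · rw [if_pos h1, coeff_mk]
    have h2 : (n ∣ m - (n - 1)) ↔ (n ∣ m + 1) := by
      have e : m - (n - 1) + n = m + 1 := by omega
      constructor
      · intro h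
        rw [← e]; exact Nat.dvd_add h dvd_rfl
      · intro h
        have := Nat.dvd_sub h (dvd_refl n)
        rwa [show m + 1 - n = m - (n - 1) by omega] at this
    rw [if_congr h2 rfl rfl]
    split_ifs <;> push_cast <;> ring
  · rw [if_neg h1]
    have : ¬ n ∣ (m + 1) := fun h => h1 (by have := Nat.le_of_dvd (Nat.succ_pos m) h; omega)
    rw [if_neg this, mul_zero, neg_zero]

lemma witt_divisor_sum (k : ℕ) (φ : ℕ → ℕ)
    (hφ : ∀ n : ℕ, 1 ≤ n →
      (φ n : ℚ) = (1 / (n : ℚ)) *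
        ∑ d ∈ n.divisors, (moebius d : ℚ) * (k : ℚ) ^ (n / d))
    (M : ℕ) (hM : 1 ≤ M) :
    ∑ d ∈ M.divisors, ((d : ℚ) * (φ d : ℚ)) = (k : ℚ) ^ M := by
  refine (sum_eq_iff_sum_mul_moebius_eq (R := ℚ)
    (f := fun d => (d : ℚ) * (φ d : ℚ)) (g := fun n => (k : ℚ) ^ n)).mpr ?_ M (by omega)
  intro n hn
  have h1 := hφ n hn
  have hn0 : (n : ℚ) ≠ 0 := by exact_mod_cast (by omega : n ≠ 0)
  have h2 : (n : ℚ) * (φ n : ℚ) = ∑ d ∈ n.divisors, (moebius d : ℚ) * (k : ℚ) ^ (n / d) := by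
    rw [h1]
    field_simp
  rw [Nat.sum_divisorsAntidiagonal (fun d e => ((moebius d : ℚ)) * (k : ℚ) ^ e)]
  exact h2.symm

lemma witt_coeff_S (k : ℕ) (φ : ℕ → ℕ)
    (hφ : ∀ n : ℕ, 1 ≤ n →
      (φ n : ℚ) = (1 / (n : ℚ)) *
        ∑ d ∈ n.divisors, (moebius d : ℚ) * (k : ℚ) ^ (n / d))
    (N m : ℕ) (hm : m < N) :
    coeff (R := ℚ) m (∑ n ∈ Finset.Icc 1 N,
        ((φ n : ℕ) : PowerSeries ℚ) * d⁄dX ℚ (1 - X ^ n) * wittG n)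
      = -(k : ℚ) ^ (m + 1) := by
  rw [map_sum,
    Finset.sum_congr rfl (fun n hn => witt_coeff_term n (Finset.mem_Icc.mp hn).1 (φ n) m),
    ← Finset.sum_filter]
  have hset : (Finset.Icc 1 N).filter (· ∣ (m + 1)) = (m + 1).divisors := by
    ext d
    simp only [Finset.mem_filter, Finset.mem_Icc, Nat.mem_divisors]
    constructor
    · rintro ⟨_, h⟩; exact ⟨h, Nat.succ_ne_zero m⟩
    · rintro ⟨h, -⟩
      have h1 : 1 ≤ d := Nat.pos_of_dvd_of_pos h (Nat.succ_pos m)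
      have h2 : d ≤ m + 1 := Nat.le_of_dvd (Nat.succ_pos m) h
      exact ⟨⟨h1, by omega⟩, h⟩
  rw [hset, ← witt_divisor_sum k φ hφ (m + 1) (Nat.succ_pos m)]
  rw [← Finset.sum_neg_distrib]
  exact Finset.sum_congr rfl fun d _ => by ring

/-- Witt's formula for the free group on `k` generators: the Witt numbers
`φ n = (1/n) * ∑_{d ∣ n} μ(d) k^(n/d)` satisfy the product identity
`∏_{n ≥ 1} (1 - t^n)^(φ n) = 1 - k t` as formal power series over `ℚ`.
The infinite product is interpreted `t`-adically: for every `N`, the finite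
product over `1 ≤ n ≤ N` agrees with `1 - k t` in all coefficients of degree
at most `N`. -/
theorem witt_formula_product_identity (k : ℕ) (φ : ℕ → ℕ)
    (hφ : ∀ n : ℕ, 1 ≤ n →
      (φ n : ℚ) = (1 / (n : ℚ)) *
        ∑ d ∈ n.divisors, (moebius d : ℚ) * (k : ℚ) ^ (n / d)) :
    ∀ N : ℕ, ∀ m ≤ N,
      PowerSeries.coeff (R := ℚ) m (∏ n ∈ Finset.Icc 1 N, (1 - PowerSeries.X ^ n) ^ (φ n)) =
        PowerSeries.coeff (R := ℚ) m (1 - PowerSeries.C (R := ℚ) (k : ℚ) * PowerSeries.X) := by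
  intro N m hm
  set F : PowerSeries ℚ := ∏ n ∈ Finset.Icc 1 N, (1 - X ^ n) ^ (φ n) with hFdef
  set g : PowerSeries ℚ := 1 - C (R := ℚ) (k : ℚ) * X with hgdef
  set Gk : PowerSeries ℚ := wittGk (k : ℚ) with hGkdef
  set S : PowerSeries ℚ := ∑ n ∈ Finset.Icc 1 N,
      ((φ n : ℕ) : PowerSeries ℚ) * d⁄dX ℚ (1 - X ^ n) * wittG n with hSdef
  have hgGk : g * Gk = 1 := wittGk_mul _
  have hdF : d⁄dX ℚ F = F * S :=
    witt_deriv_prod φ _ (fun n hn => (Finset.mem_Icc.mp hn).1)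
  have hdg : d⁄dX ℚ g = -(C (R := ℚ) (k : ℚ)) := by
    rw [hgdef, map_sub, Derivation.leibniz]
    simp
  have hdvd1 : (X : PowerSeries ℚ) ^ N ∣ S + C (R := ℚ) (k : ℚ) * Gk := by
    rw [X_pow_dvd_iff]
    intro j hj
    rw [map_add, hSdef, witt_coeff_S k φ hφ N j hj, coeff_C_mul, hGkdef, wittGk, coeff_mk]
    ring
  have hdvd2 : (X : PowerSeries ℚ) ^ N ∣ (S * g - d⁄dX ℚ g) := by
    have he : S * g - d⁄dX ℚ g = (S + C (R := ℚ) (k : ℚ) * Gk) * g := by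
      calc S * g - d⁄dX ℚ g = S * g + C (R := ℚ) (k : ℚ) * 1 := by rw [hdg]; ring
        _ = S * g + C (R := ℚ) (k : ℚ) * (g * Gk) := by rw [hgGk]
        _ = (S + C (R := ℚ) (k : ℚ) * Gk) * g := by ring
    rw [he]
    exact hdvd1.mul_right g
  set u : PowerSeries ℚ := F * Gk with hudef
  have hdu_g : d⁄dX ℚ u * g = Gk * F * (S * g - d⁄dX ℚ g) := by
    have h0 : d⁄dX ℚ (g * Gk) = 0 := by rw [hgGk]; simp
    rw [Derivation.leibniz] at h0
    simp only [smul_eq_mul] at h0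
    have hgdGk : g * d⁄dX ℚ Gk = -(d⁄dX ℚ g * Gk) := by linear_combination h0
    calc d⁄dX ℚ u * g = (d⁄dX ℚ F * Gk + F * d⁄dX ℚ Gk) * g := by
          rw [hudef, Derivation.leibniz]
          simp only [smul_eq_mul]
          ring
      _ = d⁄dX ℚ F * Gk * g + F * (g * d⁄dX ℚ Gk) := by ring
      _ = F * S * Gk * g + F * (-(d⁄dX ℚ g * Gk)) := by rw [hdF, hgdGk]
      _ = Gk * F * (S * g - d⁄dX ℚ g) := by ring
  have hdu : (X : PowerSeries ℚ) ^ N ∣ d⁄dX ℚ u := by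
    have he : d⁄dX ℚ u = Gk * F * (S * g - d⁄dX ℚ g) * Gk := by
      calc d⁄dX ℚ u = d⁄dX ℚ u * (g * Gk) := by rw [hgGk, mul_one]
        _ = (d⁄dX ℚ u * g) * Gk := by ring
        _ = _ := by rw [hdu_g]
    rw [he]
    exact (hdvd2.mul_left _).mul_right _
  have hF0 : constantCoeff (R := ℚ) F = 1 := by
    rw [hFdef, map_prod]
    rw [Finset.prod_congr rfl (fun n hn => ?_), Finset.prod_const_one]
    rw [map_pow, map_sub, map_one, map_pow, constantCoeff_X,
      zero_pow (by have := (Finset.mem_Icc.mp hn).1; omega), sub_zero, one_pow]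
  have hu0 : coeff (R := ℚ) 0 u = 1 := by
    rw [coeff_zero_eq_constantCoeff, map_mul, hF0, one_mul, hGkdef]
    rw [← coeff_zero_eq_constantCoeff_apply, wittGk, coeff_mk, pow_zero]
  have huj : ∀ j, 1 ≤ j → j ≤ N → coeff (R := ℚ) j u = 0 := by
    intro j h1 h2
    have h3 := (X_pow_dvd_iff.mp hdu) (j - 1) (by omega)
    rw [coeff_derivative] at h3
    rcases mul_eq_zero.mp h3 with h | h
    · rwa [show j - 1 + 1 = j by omega] at h
    · exfalso
      have h4 : ((j - 1 : ℕ) : ℚ) + 1 ≠ 0 := by positivity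
      exact h4 (by exact_mod_cast h)
  have hu1 : (X : PowerSeries ℚ) ^ (N + 1) ∣ u - 1 := by
    rw [X_pow_dvd_iff]
    intro j hj
    rw [map_sub, coeff_one]
    rcases Nat.eq_zero_or_pos j with rfl | hj1
    · rw [hu0]; simp
    · rw [huj j hj1 (by omega), if_neg (by omega)]; ring
  have hFg : F - g = (u - 1) * g := by
    calc F - g = F * (g * Gk) - g := by rw [hgGk, mul_one]
      _ = (u - 1) * g := by rw [hudef]; ring
  have hfin : coeff (R := ℚ) m (F - g) = 0 := by
    have hd : (X : PowerSeries ℚ) ^ (N + 1) ∣ F - g := by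
      rw [hFg]; exact hu1.mul_right g
    exact X_pow_dvd_iff.mp hd m (by omega)
  rw [map_sub] at hfin
  linarith
end

section
/- In a finite matroid, every line-closed flat structure detects flats via bases: a matroid G is line-closed if and only if for every flat X of G and every basis B of X (i.e., maximal independent subset of X), the line-closure of B equals X. -/
/-- A subset `T` is line-closed in the matroid `M` if it contains the closure
of every pair of its points. -/
def IsLineClosedSet {α : Type*} (M : Matroid α) (T : Set α) : Prop :=
  ∀ a ∈ T, ∀ b ∈ T, M.closure {a, b} ⊆ T

/-- The line-closure of `S`: the smallest subset of the ground set containing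
`S` that is closed under adding closures of pairs of its points. -/
def lineClosure {α : Type*} (M : Matroid α) (S : Set α) : Set α :=
  ⋂₀ {T | T ⊆ M.E ∧ S ⊆ T ∧ IsLineClosedSet M T}

lemma subset_lineClosure {α : Type*} (M : Matroid α) (S : Set α) :
    S ⊆ lineClosure M S :=
  Set.subset_sInter fun _ hT => hT.2.1

lemma lineClosure_subset {α : Type*} {M : Matroid α} {S T : Set α}
    (hTE : T ⊆ M.E) (hST : S ⊆ T) (hT : IsLineClosedSet M T) :
    lineClosure M S ⊆ T :=
  Set.sInter_subset_of_mem ⟨hTE, hST, hT⟩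

lemma lineClosure_subset_ground {α : Type*} {M : Matroid α} {S : Set α}
    (hS : S ⊆ M.E) : lineClosure M S ⊆ M.E :=
  lineClosure_subset le_rfl hS (fun a _ b _ => M.closure_subset_ground _)

lemma isLineClosedSet_lineClosure {α : Type*} (M : Matroid α) (S : Set α) :
    IsLineClosedSet M (lineClosure M S) := by
  intro a ha b hb
  refine Set.subset_sInter fun T hT => ?_
  exact (hT.2.2 a (Set.sInter_subset_of_mem hT ha) b (Set.sInter_subset_of_mem hT hb))

lemma flat_closure' {α : Type*} (M : Matroid α) (X : Set α) : M.IsFlat (M.closure X) := by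
  refine ⟨fun I Y hI hIY => ?_, M.closure_subset_ground X⟩
  have h1 : Y ⊆ M.closure I := hIY.subset_closure
  rwa [hI.closure_eq_closure, M.closure_closure] at h1

/-- A finite simple matroid is line-closed (every line-closed subset of the
ground set is a flat) if and only if for every flat `X` and every basis `B`
of `X`, the line-closure of `B` equals `X`. -/
theorem line_closed_iff_bases_detect_flats {α : Type*} (M : Matroid α) [M.Finite]
    (hsimple : ∀ S ⊆ M.E, S.ncard ≤ 2 → M.Indep S) :
    (∀ T ⊆ M.E, IsLineClosedSet M T → M.IsFlat T) ↔
      (∀ X : Set α, M.IsFlat X → ∀ B : Set α, M.IsBasis B X → lineClosure M B = X) := by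
  constructor
  · intro h X hX B hB
    have hXlc : IsLineClosedSet M X := fun a ha b hb =>
      (M.closure_subset_closure (Set.pair_subset ha hb)).trans hX.closure.subset
    apply subset_antisymm (lineClosure_subset hX.subset_ground hB.subset hXlc)
    have hBE : B ⊆ M.E := hB.indep.subset_ground
    have hflat : M.IsFlat (lineClosure M B) :=
      h _ (lineClosure_subset_ground hBE) (isLineClosedSet_lineClosure M B)
    calc X = M.closure B := by rw [hB.closure_eq_closure, hX.closure]
    _ ⊆ M.closure (lineClosure M B) := M.closure_subset_closure (subset_lineClosure M B)
    _ = lineClosure M B := hflat.closure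
  · intro h T hTE hT
    obtain ⟨B, hB⟩ := M.exists_isBasis T hTE
    have hX : M.IsFlat (M.closure T) := flat_closure' M T
    have hkey := h _ hX _ hB.isBasis_closure_right
    have hsub : lineClosure M B ⊆ T := lineClosure_subset hTE hB.subset hT
    have heq : M.closure T = T := subset_antisymm (hkey ▸ hsub) (M.subset_closure T)
    exact heq ▸ hX
end

section
/- Every line-closed simple matroid is formal: if G is a finite simple matroid in which every line-closed set is a flat, then there exists a basis of G whose line-closure is the entire ground set. -/
/-- Every line-closed finite simple matroid is formal in Yuzvinsky's sense:
if every line-closed subset of the ground set is a flat, then some basis of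
the matroid has line-closure equal to the whole ground set. -/
theorem line_closed_matroid_is_formal {α : Type*} (M : Matroid α) [M.Finite]
    (hsimple : ∀ S ⊆ M.E, S.ncard ≤ 2 → M.Indep S)
    (hlc : ∀ T ⊆ M.E, IsLineClosedSet M T → M.IsFlat T) :
    ∃ B : Set α, M.IsBase B ∧ lineClosure M B = M.E := by
  obtain ⟨B, hB⟩ := M.exists_isBase
  refine ⟨B, hB, ?_⟩
  have hE : M.E ∈ {T | T ⊆ M.E ∧ B ⊆ T ∧ IsLineClosedSet M T} :=
    ⟨subset_rfl, hB.subset_ground, fun a _ b _ => M.closure_subset_ground _⟩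
  have hsubE : lineClosure M B ⊆ M.E := Set.sInter_subset_of_mem hE
  have hBsub : B ⊆ lineClosure M B := fun x hx =>
    Set.mem_sInter.2 fun T hT => hT.2.1 hx
  have hlcset : IsLineClosedSet M (lineClosure M B) := by
    intro a ha b hb
    refine Set.subset_sInter fun T hT => ?_
    exact (hT.2.2 a (Set.mem_sInter.1 ha T hT) b (Set.mem_sInter.1 hb T hT))
  have hflat : M.IsFlat (lineClosure M B) := hlc _ hsubE hlcset
  refine hsubE.antisymm ?_
  calc M.E = M.closure B := hB.closure_eq.symm
    _ ⊆ M.closure (lineClosure M B) := M.closure_subset_closure hBsub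
    _ = lineClosure M B := hflat.closure
end
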